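/- For an odd prime p, a field F_q with q = p^n, and an integer k with 2 ≤ k ≤ p−1, the space V_{k+(q-1)} decomposes as a direct sum of F_q-vector spaces: V_{k+(q-1)} = D(V_k) ⊕ θ_q·V_{k-2} ⊕ W, where W is spanned by the monomials X^r Y^{k+q-1-r} for k ≤ r ≤ q−1. -/

import Mathlib

/-!
`V_{k+q-1}` has the monomial basis `X^r Y^{k+q-1-r}`, `0 ≤ r ≤ k+q-1`, hence dimension `k+q`,
while `D(V_k)`, `θ_q·V_{k-2}` and `W` have dimensions at most `k+1`, `k-1` and `q-k`. So it is
enough that the three subspaces together contain every monomial of degree `k+q-1`. `W` contains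
those with `k ≤ r ≤ q-1`, and `D(Y^k)`, `D(X^k)` are `k` times the two extreme ones. Every other
monomial belongs to a pair `u = X^{a+q} Y^{b+1}`, `v = X^{a+1} Y^{b+q}` with `a + b + 2 = k`, and
`D(X^{a+1} Y^{b+1}) = (a+1) u + (b+1) v`, `θ_q X^a Y^b = u - v` determine `u` and `v` because
their determinant `k` is nonzero in `F_q` (`0 < k < p`).
-/

open MvPolynomial

/-- The Serre operator `D f = X^q ∂f/∂X + Y^q ∂f/∂Y` as a linear map. -/
noncomputable def serreDLin (F : Type*) [CommRing F] (q : ℕ) :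
    MvPolynomial (Fin 2) F →ₗ[F] MvPolynomial (Fin 2) F :=
  (LinearMap.mulLeft F (X 0 ^ q)) ∘ₗ (pderiv 0).toLinearMap +
    (LinearMap.mulLeft F (X 1 ^ q)) ∘ₗ (pderiv 1).toLinearMap

instance MvPolynomial.finite_homogeneousSubmodule {σ R : Type*} [CommSemiring R] [Finite σ]
    (n : ℕ) : Module.Finite R (homogeneousSubmodule σ R n) :=
  Module.Finite.iff_fg.mpr (homogeneousSubmodule_fg σ R n)

theorem Submodule.inf_eq_bot_of_finrank_add_le {K V : Type*} [DivisionRing K] [AddCommGroup V]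
    [Module K V] {A B : Submodule K V} [FiniteDimensional K A] [FiniteDimensional K B]
    (h : Module.finrank K A + Module.finrank K B ≤ Module.finrank K ↥(A ⊔ B)) : A ⊓ B = ⊥ := by
  have := Submodule.finrank_sup_add_finrank_inf_eq A B
  have : FiniteDimensional K ↥(A ⊓ B) := Submodule.finiteDimensional_of_le inf_le_left
  exact Submodule.finrank_eq_zero.mp (by omega)

section MvPolynomialFinTwo

variable {R : Type*} [CommRing R]

theorem X_pow_mul_X_pow_eq_monomial (a b : ℕ) :
    (X 0 ^ a * X 1 ^ b : MvPolynomial (Fin 2) R) =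
      monomial (Finsupp.single 0 a + Finsupp.single 1 b) 1 := by
  rw [X_pow_eq_monomial, X_pow_eq_monomial, monomial_mul, one_mul]

theorem isHomogeneous_X_pow_mul_X_pow (a b : ℕ) :
    (X 0 ^ a * X 1 ^ b : MvPolynomial (Fin 2) R).IsHomogeneous (a + b) :=
  (isHomogeneous_X_pow 0 a).mul (isHomogeneous_X_pow 1 b)

theorem homogeneousSubmodule_fin_two_eq_span (d : ℕ) :
    homogeneousSubmodule (Fin 2) R d =
      Submodule.span R (Set.range fun i : Fin (d + 1) =>
        (X 0 ^ (i : ℕ) * X 1 ^ (d - i) : MvPolynomial (Fin 2) R)) := by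
  rw [homogeneousSubmodule_eq_finsupp_supported, AddMonoidAlgebra.supported_eq_span_single]
  congr 1
  ext f
  simp only [Set.mem_image, Set.mem_ofPred_eq, Set.mem_range, X_pow_mul_X_pow_eq_monomial,
    Finsupp.degree_eq_sum, Fin.sum_univ_two]
  constructor
  · rintro ⟨x, hx, rfl⟩
    refine ⟨⟨x 0, by omega⟩, ?_⟩
    show monomial _ 1 = monomial x 1
    congr 2
    ext j
    fin_cases j <;> simp
    omega
  · rintro ⟨i, rfl⟩
    exact ⟨_, by simp; omega, rfl⟩

theorem linearIndependent_X_pow_mul_X_pow [Nontrivial R] (d : ℕ) :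
    LinearIndependent R fun i : Fin (d + 1) =>
      (X 0 ^ (i : ℕ) * X 1 ^ (d - i) : MvPolynomial (Fin 2) R) := by
  have h : (fun i : Fin (d + 1) => (X 0 ^ (i : ℕ) * X 1 ^ (d - i) : MvPolynomial (Fin 2) R)) =
      basisMonomials (Fin 2) R ∘
        fun i : Fin (d + 1) => Finsupp.single 0 (i : ℕ) + Finsupp.single 1 (d - i) := by
    ext1 i
    simp [X_pow_mul_X_pow_eq_monomial]
  rw [h]
  exact (basisMonomials (Fin 2) R).linearIndependent.comp _
    fun i j hij => Fin.ext (by simpa using DFunLike.congr_fun hij 0)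

theorem finrank_homogeneousSubmodule_fin_two [StrongRankCondition R] (d : ℕ) :
    Module.finrank R (homogeneousSubmodule (Fin 2) R d) = d + 1 := by
  have := nontrivial_of_invariantBasisNumber R
  rw [homogeneousSubmodule_fin_two_eq_span,
    finrank_span_eq_card (linearIndependent_X_pow_mul_X_pow d), Fintype.card_fin]

theorem serreDLin_X_pow_mul_X_pow (q a b : ℕ) :
    serreDLin R q (X 0 ^ a * X 1 ^ b) =
      (a : R) • (X 0 ^ (a + q - 1) * X 1 ^ b) + (b : R) • (X 0 ^ a * X 1 ^ (b + q - 1)) := by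
  rcases a with _ | a <;> rcases b with _ | b <;>
    simp [serreDLin, Derivation.leibniz_pow, smul_eq_C_mul] <;> ring

theorem MvPolynomial.IsHomogeneous.serreDLin {f : MvPolynomial (Fin 2) R} {n : ℕ}
    (hf : f.IsHomogeneous n) (hn : 0 < n) (q : ℕ) :
    (serreDLin R q f).IsHomogeneous (n + q - 1) := by
  rw [show n + q - 1 = q + (n - 1) by omega]
  exact ((isHomogeneous_X_pow 0 q).mul hf.pderiv).add ((isHomogeneous_X_pow 1 q).mul hf.pderiv)

variable (R) in
noncomputable def theta (q : ℕ) : MvPolynomial (Fin 2) R := X 0 ^ q * X 1 - X 0 * X 1 ^ q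

theorem isHomogeneous_theta (q : ℕ) : (theta R q).IsHomogeneous (q + 1) :=
  ((isHomogeneous_X_pow 0 q).mul (isHomogeneous_X R 1)).sub
    (by simpa [add_comm] using (isHomogeneous_X R 0).mul (isHomogeneous_X_pow 1 q))

theorem theta_mul_X_pow_mul_X_pow (q a b : ℕ) :
    theta R q * (X 0 ^ a * X 1 ^ b) =
      X 0 ^ (a + q) * X 1 ^ (b + 1) - X 0 ^ (a + 1) * X 1 ^ (b + q) := by
  rw [theta]
  ring

end MvPolynomialFinTwo

section Decomposition

variable (R : Type*) [CommRing R] (q : ℕ)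

-- `D(V_k)`, `θ_q·V_d` and `W` in the notation of the statement.
noncomputable def serreImage (k : ℕ) : Submodule R (MvPolynomial (Fin 2) R) :=
  (homogeneousSubmodule (Fin 2) R k).map (serreDLin R q)

noncomputable def thetaMultiples (d : ℕ) : Submodule R (MvPolynomial (Fin 2) R) :=
  (homogeneousSubmodule (Fin 2) R d).map (LinearMap.mulLeft R (theta R q))

noncomputable def monomialComplement (k : ℕ) : Submodule R (MvPolynomial (Fin 2) R) :=
  Submodule.span R {m | ∃ r : ℕ, k ≤ r ∧ r ≤ q - 1 ∧ m = X 0 ^ r * X 1 ^ (k + q - 1 - r)}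

variable {R q}

theorem serreImage_le_homogeneousSubmodule {k : ℕ} (hk : 0 < k) :
    serreImage R q k ≤ homogeneousSubmodule (Fin 2) R (k + q - 1) :=
  Submodule.map_le_iff_le_comap.mpr fun _ hf => hf.serreDLin hk q

theorem thetaMultiples_le_homogeneousSubmodule (d : ℕ) :
    thetaMultiples R q d ≤ homogeneousSubmodule (Fin 2) R (q + 1 + d) :=
  Submodule.map_le_iff_le_comap.mpr fun _ hf => (isHomogeneous_theta q).mul hf

theorem monomialComplement_le_homogeneousSubmodule (k : ℕ) :
    monomialComplement R q k ≤ homogeneousSubmodule (Fin 2) R (k + q - 1) := by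
  rw [monomialComplement, Submodule.span_le]
  rintro _ ⟨r, -, hr, rfl⟩
  have h := isHomogeneous_X_pow_mul_X_pow (R := R) r (k + q - 1 - r)
  rwa [Nat.add_sub_cancel' (by omega)] at h

variable [StrongRankCondition R]

theorem finrank_serreImage_le (k : ℕ) : Module.finrank R (serreImage R q k) ≤ k + 1 :=
  (Submodule.finrank_map_le _ _).trans_eq (finrank_homogeneousSubmodule_fin_two k)

theorem finrank_thetaMultiples_le (d : ℕ) : Module.finrank R (thetaMultiples R q d) ≤ d + 1 :=
  (Submodule.finrank_map_le _ _).trans_eq (finrank_homogeneousSubmodule_fin_two d)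

theorem finrank_monomialComplement_le (hq : 0 < q) (k : ℕ) :
    Module.finrank R (monomialComplement R q k) ≤ q - k := by
  classical
  have h : {m : MvPolynomial (Fin 2) R |
        ∃ r : ℕ, k ≤ r ∧ r ≤ q - 1 ∧ m = X 0 ^ r * X 1 ^ (k + q - 1 - r)} =
      ((Finset.Icc k (q - 1)).image fun r =>
        (X 0 ^ r * X 1 ^ (k + q - 1 - r) : MvPolynomial (Fin 2) R) :
          Set (MvPolynomial (Fin 2) R)) := by
    ext m
    simp [eq_comm, and_assoc]
  calc Module.finrank R (monomialComplement R q k)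
      ≤ ((Finset.Icc k (q - 1)).image fun r =>
          (X 0 ^ r * X 1 ^ (k + q - 1 - r) : MvPolynomial (Fin 2) R)).card := by
        rw [monomialComplement, h]
        exact finrank_span_finset_le_card _
    _ ≤ (Finset.Icc k (q - 1)).card := Finset.card_image_le
    _ = q - k := by rw [Nat.card_Icc]; omega

end Decomposition

section DirectSum

variable {K : Type*} [Field K] {q : ℕ}

theorem X_pow_mul_X_pow_mem_of_serreDLin_mem {S : Submodule K (MvPolynomial (Fin 2) K)}
    {a b : ℕ} (hk : ((a + b + 2 : ℕ) : K) ≠ 0)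
    (hD : serreDLin K q (X 0 ^ (a + 1) * X 1 ^ (b + 1)) ∈ S)
    (hθ : theta K q * (X 0 ^ a * X 1 ^ b) ∈ S) :
    X 0 ^ (a + q) * X 1 ^ (b + 1) ∈ S ∧ X 0 ^ (a + 1) * X 1 ^ (b + q) ∈ S := by
  rw [serreDLin_X_pow_mul_X_pow, show a + 1 + q - 1 = a + q by omega,
    show b + 1 + q - 1 = b + q by omega] at hD
  rw [theta_mul_X_pow_mul_X_pow] at hθ
  constructor
  · rw [← S.smul_mem_iff hk]
    convert S.add_mem hD (S.smul_mem ((b + 1 : ℕ) : K) hθ) using 1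
    push_cast
    module
  · rw [← S.smul_mem_iff hk]
    convert S.sub_mem hD (S.smul_mem ((a + 1 : ℕ) : K) hθ) using 1
    push_cast
    module

theorem homogeneousSubmodule_le_serreImage_sup {k : ℕ} (hk : (k : K) ≠ 0) :
    homogeneousSubmodule (Fin 2) K (k + q - 1) ≤
      serreImage K q k ⊔ thetaMultiples K q (k - 2) ⊔ monomialComplement K q k := by
  set S := serreImage K q k ⊔ thetaMultiples K q (k - 2) ⊔ monomialComplement K q k
  have hD : ∀ a b, a + b = k → serreDLin K q (X 0 ^ a * X 1 ^ b) ∈ S := fun a b h =>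
    Submodule.mem_sup_left <| Submodule.mem_sup_left <|
      Submodule.mem_map_of_mem (h ▸ isHomogeneous_X_pow_mul_X_pow a b)
  have hθ : ∀ a b, a + b + 2 = k → theta K q * (X 0 ^ a * X 1 ^ b) ∈ S := fun a b h =>
    Submodule.mem_sup_left <| Submodule.mem_sup_right <|
      Submodule.mem_map_of_mem (f := LinearMap.mulLeft K (theta K q))
        ((Nat.eq_sub_of_add_eq h) ▸ isHomogeneous_X_pow_mul_X_pow a b)
  have hC : ∀ r, k ≤ r → r ≤ q - 1 → X 0 ^ r * X 1 ^ (k + q - 1 - r) ∈ S := fun r h1 h2 =>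
    Submodule.mem_sup_right (Submodule.subset_span ⟨r, h1, h2, rfl⟩)
  have hpair : ∀ a b, a + b + 2 = k →
      X 0 ^ (a + q) * X 1 ^ (b + 1) ∈ S ∧ X 0 ^ (a + 1) * X 1 ^ (b + q) ∈ S := fun a b h =>
    X_pow_mul_X_pow_mem_of_serreDLin_mem (h ▸ hk) (hD _ _ (by omega)) (hθ a b h)
  rw [homogeneousSubmodule_fin_two_eq_span, Submodule.span_le]
  rintro _ ⟨⟨i, hi⟩, rfl⟩
  dsimp only
  rw [SetLike.mem_coe]
  rcases Nat.eq_zero_or_pos i with rfl | hi0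
  · have h := hD 0 k (zero_add k)
    rw [serreDLin_X_pow_mul_X_pow] at h
    simpa [S.smul_mem_iff hk] using h
  rcases lt_or_ge i k with hik | hik
  · convert (hpair (i - 1) (k - 1 - i) (by omega)).2 using 3 <;> omega
  rcases le_or_gt i (q - 1) with hiq | hiq
  · exact hC i hik hiq
  rcases lt_or_ge i (k + q - 1) with hiN | hiN
  · have h : i - q + (k + q - 2 - i) + 2 = k := by omega
    convert (hpair (i - q) (k + q - 2 - i) h).1 using 3 <;> omega
  · have h := hD k 0 (add_zero k)
    rw [serreDLin_X_pow_mul_X_pow] at h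
    obtain rfl : i = k + q - 1 := by omega
    simpa [S.smul_mem_iff hk] using h

theorem serreImage_thetaMultiples_monomialComplement_directSum {k : ℕ} (hk2 : 2 ≤ k)
    (hkq : k < q) (hk : (k : K) ≠ 0) :
    serreImage K q k ⊓ thetaMultiples K q (k - 2) = ⊥ ∧
      (serreImage K q k ⊔ thetaMultiples K q (k - 2)) ⊓ monomialComplement K q k = ⊥ ∧
      serreImage K q k ⊔ thetaMultiples K q (k - 2) ⊔ monomialComplement K q k =
        homogeneousSubmodule (Fin 2) K (k + q - 1) := by
  set A := serreImage K q k
  set B := thetaMultiples K q (k - 2)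
  set C := monomialComplement K q k
  set V := homogeneousSubmodule (Fin 2) K (k + q - 1)
  have hA : A ≤ V := serreImage_le_homogeneousSubmodule (by omega)
  have hB : B ≤ V := by
    have h := thetaMultiples_le_homogeneousSubmodule (R := K) (q := q) (k - 2)
    rwa [show q + 1 + (k - 2) = k + q - 1 by omega] at h
  have hC : C ≤ V := monomialComplement_le_homogeneousSubmodule k
  have hABC : A ⊔ B ⊔ C = V :=
    le_antisymm (sup_le (sup_le hA hB) hC) (homogeneousSubmodule_le_serreImage_sup hk)
  have : FiniteDimensional K A := Submodule.finiteDimensional_of_le hA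
  have : FiniteDimensional K B := Submodule.finiteDimensional_of_le hB
  have : FiniteDimensional K C := Submodule.finiteDimensional_of_le hC
  have hV : Module.finrank K V = k + q := by
    rw [finrank_homogeneousSubmodule_fin_two]
    omega
  have hAB := Submodule.finrank_add_le_finrank_add_finrank A B
  have hAB_C := Submodule.finrank_add_le_finrank_add_finrank (A ⊔ B) C
  have hAr : Module.finrank K A ≤ k + 1 := finrank_serreImage_le k
  have hBr : Module.finrank K B ≤ k - 2 + 1 := finrank_thetaMultiples_le (k - 2)
  have hCr : Module.finrank K C ≤ q - k := finrank_monomialComplement_le (by omega) k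
  rw [hABC, hV] at hAB_C
  refine ⟨Submodule.inf_eq_bot_of_finrank_add_le ?_, Submodule.inf_eq_bot_of_finrank_add_le ?_,
    hABC⟩
  · omega
  · rw [hABC, hV]
    omega

end DirectSum

theorem Vkq_direct_sum_decomposition_general (F : Type*) [Field F] [Fintype F]
    (p : ℕ) [CharP F p]
    (k : ℕ) (hk2 : 2 ≤ k) (hkp : k ≤ p - 1) :
    (Submodule.map (serreDLin F (Fintype.card F)) (homogeneousSubmodule (Fin 2) F k)) ⊓
        (Submodule.map
          (LinearMap.mulLeft F (X 0 ^ Fintype.card F * X 1 - X 0 * X 1 ^ Fintype.card F))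
          (homogeneousSubmodule (Fin 2) F (k - 2))) = ⊥ ∧
    ((Submodule.map (serreDLin F (Fintype.card F)) (homogeneousSubmodule (Fin 2) F k)) ⊔
        (Submodule.map
          (LinearMap.mulLeft F (X 0 ^ Fintype.card F * X 1 - X 0 * X 1 ^ Fintype.card F))
          (homogeneousSubmodule (Fin 2) F (k - 2)))) ⊓
      (Submodule.span F
        {m : MvPolynomial (Fin 2) F | ∃ r : ℕ, k ≤ r ∧ r ≤ Fintype.card F - 1 ∧
          m = X 0 ^ r * X 1 ^ (k + Fintype.card F - 1 - r)}) = ⊥ ∧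
    (Submodule.map (serreDLin F (Fintype.card F)) (homogeneousSubmodule (Fin 2) F k)) ⊔
      (Submodule.map
        (LinearMap.mulLeft F (X 0 ^ Fintype.card F * X 1 - X 0 * X 1 ^ Fintype.card F))
        (homogeneousSubmodule (Fin 2) F (k - 2))) ⊔
      (Submodule.span F
        {m : MvPolynomial (Fin 2) F | ∃ r : ℕ, k ≤ r ∧ r ≤ Fintype.card F - 1 ∧
          m = X 0 ^ r * X 1 ^ (k + Fintype.card F - 1 - r)}) =
      homogeneousSubmodule (Fin 2) F (k + Fintype.card F - 1) := by
  have hk : (k : F) ≠ 0 := fun h =>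
    absurd (Nat.le_of_dvd (by omega) ((CharP.cast_eq_zero_iff F p k).mp h)) (by omega)
  have hpq : p ≤ Fintype.card F :=
    Nat.le_of_dvd Fintype.card_pos ((CharP.cast_eq_zero_iff F p _).mp (Nat.cast_card_eq_zero F))
  exact serreImage_thetaMultiples_monomialComplement_directSum hk2 (by omega) hk

/-- For `p` an odd prime, `q = p^n`, and `2 ≤ k ≤ p − 1`, one has the direct sum
decomposition of `F_q`-vector spaces
`V_{k+(q-1)} = D(V_k) ⊕ θ_q·V_{k-2} ⊕ W`, where `W` is spanned by the monomials
`X^r Y^{k+q-1-r}` for `k ≤ r ≤ q − 1`. -/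
theorem Vkq_direct_sum_decomposition (F : Type*) [Field F] [Fintype F]
    (p n : ℕ) (hp : p.Prime) (hodd : Odd p) [CharP F p]
    (hq : Fintype.card F = p ^ n) (hn : 0 < n)
    (k : ℕ) (hk2 : 2 ≤ k) (hkp : k ≤ p - 1) :
    (Submodule.map (serreDLin F (Fintype.card F)) (homogeneousSubmodule (Fin 2) F k)) ⊓
        (Submodule.map
          (LinearMap.mulLeft F (X 0 ^ Fintype.card F * X 1 - X 0 * X 1 ^ Fintype.card F))
          (homogeneousSubmodule (Fin 2) F (k - 2))) = ⊥ ∧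
    ((Submodule.map (serreDLin F (Fintype.card F)) (homogeneousSubmodule (Fin 2) F k)) ⊔
        (Submodule.map
          (LinearMap.mulLeft F (X 0 ^ Fintype.card F * X 1 - X 0 * X 1 ^ Fintype.card F))
          (homogeneousSubmodule (Fin 2) F (k - 2)))) ⊓
      (Submodule.span F
        {m : MvPolynomial (Fin 2) F | ∃ r : ℕ, k ≤ r ∧ r ≤ Fintype.card F - 1 ∧
          m = X 0 ^ r * X 1 ^ (k + Fintype.card F - 1 - r)}) = ⊥ ∧
    (Submodule.map (serreDLin F (Fintype.card F)) (homogeneousSubmodule (Fin 2) F k)) ⊔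
      (Submodule.map
        (LinearMap.mulLeft F (X 0 ^ Fintype.card F * X 1 - X 0 * X 1 ^ Fintype.card F))
        (homogeneousSubmodule (Fin 2) F (k - 2))) ⊔
      (Submodule.span F
        {m : MvPolynomial (Fin 2) F | ∃ r : ℕ, k ≤ r ∧ r ≤ Fintype.card F - 1 ∧
          m = X 0 ^ r * X 1 ^ (k + Fintype.card F - 1 - r)}) =
      homogeneousSubmodule (Fin 2) F (k + Fintype.card F - 1) :=
  Vkq_direct_sum_decomposition_general F p k hk2 hkp
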